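/- For all t > 0 and x, y ∈ ℝ^d, the Hermite heat kernel satisfies G_t(x,y) ≤ W_t(x−y), where W_t(z) = (4πt)^{-d/2} exp(-‖z‖²/(4t)) is the Gauss–Weierstrass kernel. -/
import Mathlib


open MeasureTheory Real

/-- The Hermite heat kernel on ℝ^d. -/
noncomputable def hermiteHeatKernel (d : ℕ) (t : ℝ) (x y : EuclideanSpace ℝ (Fin d)) : ℝ :=
  (2 * Real.pi * Real.sinh (2 * t)) ^ (-(d : ℝ) / 2) *
    Real.exp (-(1 / 4) * (Real.tanh t * ‖x + y‖ ^ 2 +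
      (Real.cosh t / Real.sinh t) * ‖x - y‖ ^ 2))

/-- The Gauss–Weierstrass kernel on ℝ^d. -/
noncomputable def gaussWeierstrass (d : ℕ) (t : ℝ) (z : EuclideanSpace ℝ (Fin d)) : ℝ :=
  (4 * Real.pi * t) ^ (-(d : ℝ) / 2) * Real.exp (-‖z‖ ^ 2 / (4 * t))

lemma sinh_le_mul_cosh {t : ℝ} (ht : 0 ≤ t) : Real.sinh t ≤ t * Real.cosh t := by
  have h : MonotoneOn (fun s : ℝ => s * Real.cosh s - Real.sinh s) (Set.Ici 0) := by
    apply monotoneOn_of_deriv_nonneg (convex_Ici 0)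
    · fun_prop
    · apply Differentiable.differentiableOn; fun_prop
    · intro s hs
      rw [interior_Ici] at hs
      have : deriv (fun s : ℝ => s * Real.cosh s - Real.sinh s) s = s * Real.sinh s := by
        have h1 : HasDerivAt (fun s : ℝ => s * Real.cosh s - Real.sinh s)
            (1 * Real.cosh s + s * Real.sinh s - Real.cosh s) s :=
          ((hasDerivAt_id s).mul (Real.hasDerivAt_cosh s)).sub (Real.hasDerivAt_sinh s)
        rw [h1.deriv]; ring
      rw [this]
      exact mul_nonneg (le_of_lt hs) (Real.sinh_nonneg_iff.2 (le_of_lt hs))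
  have := h (Set.self_mem_Ici) (Set.mem_Ici.2 ht) ht
  simpa using this

theorem stmt_7 (d : ℕ) (t : ℝ) (ht : 0 < t) (x y : EuclideanSpace ℝ (Fin d)) :
    hermiteHeatKernel d t x y ≤ gaussWeierstrass d t (x - y) := by
  have hsinh : 0 < Real.sinh t := Real.sinh_pos_iff.2 ht
  have hcosh : 0 < Real.cosh t := Real.cosh_pos t
  unfold hermiteHeatKernel gaussWeierstrass
  have hpi := Real.pi_pos
  apply mul_le_mul
  · apply Real.rpow_le_rpow_of_nonpos (by positivity)
    · have h2t : 2 * t ≤ Real.sinh (2 * t) :=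
        le_of_lt ((Real.self_lt_sinh_iff).2 (by linarith))
      nlinarith
    · have : (0:ℝ) ≤ (d:ℝ) := Nat.cast_nonneg d
      linarith
  · apply Real.exp_le_exp.2
    have htanh : 0 ≤ Real.tanh t * ‖x + y‖ ^ 2 := by
      have htn : 0 ≤ Real.tanh t := by
        rw [Real.tanh_eq_sinh_div_cosh]; positivity
      positivity
    have hst : Real.sinh t ≤ t * Real.cosh t := sinh_le_mul_cosh ht.le
    have hcoth : ‖x - y‖ ^ 2 / t ≤ Real.cosh t / Real.sinh t * ‖x - y‖ ^ 2 := by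
      rw [div_le_iff₀ ht, div_mul_eq_mul_div, div_mul_eq_mul_div, le_div_iff₀ hsinh]
      nlinarith [sq_nonneg (‖x - y‖)]
    have hnorm : (0:ℝ) ≤ ‖x - y‖ ^ 2 / t := by positivity
    have : -‖x - y‖ ^ 2 / (4 * t) = -(1/4) * (‖x - y‖ ^ 2 / t) := by ring
    rw [this]
    nlinarith [hcoth, htanh]
  · positivity
  · positivity
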